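/- arXiv:hep-th/0405216 — 2 statements merged into one kernel-verified Lean document; each statement's English description precedes it below -/
import Mathlib

section
/- Let w1 = λ/(1-λ²) and w2 = (1+λ²)/(2(1-λ²)) with λ = e^{-2t} for t > 0. Then for the Mehler kernel K(x,y) = (w1/π)^{N/2} exp[2 w1 (x·y) - w2(|x|² + |y|²)] on ℝ^N × ℝ^N, one has ∫∫ |K(x,y)|² dx dy = w1^N; in particular K is square integrable. -/
/-!
`|K|²` is `(w1/π)^N` times the correlated Gaussian `exp (-a (|x|² + |y|²) + b x·y)` with
`a = 2 w2`, `b = 4 w1`. Integrating out `y` by completing the square leaves an isotropic Gaussian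
in `x`, so the double integral is `π^N / (a² - b²/4)^(N/2)` as soon as `b² < 4a²`, and Tonelli turns
the same computation into integrability. The Mehler weights satisfy `w2² - w1² = 1/4`, i.e.
`a² - b²/4 = 1`, so the total is `(w1/π)^N π^N = w1^N`.
-/

open MeasureTheory Real
open scoped RealInnerProductSpace

section CorrelatedGaussian

variable {V : Type*} [NormedAddCommGroup V] [InnerProductSpace ℝ V]

lemma ofReal_exp_neg_mul_sq_norm_add_mul_inner (a b : ℝ) (w v : V) :
    ((exp (-a * ‖v‖ ^ 2 + b * ⟪w, v⟫) : ℝ) : ℂ) =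
      Complex.exp (-(a : ℂ) * ‖v‖ ^ 2 + (b : ℂ) * ⟪w, v⟫) := by
  push_cast
  ring_nf

noncomputable def correlatedGaussian (a b : ℝ) (p : V × V) : ℝ :=
  exp (-a * (‖p.1‖ ^ 2 + ‖p.2‖ ^ 2) + b * ⟪p.1, p.2⟫)

lemma correlatedGaussian_pos (a b : ℝ) (p : V × V) : 0 < correlatedGaussian a b p := exp_pos _

lemma continuous_correlatedGaussian (a b : ℝ) : Continuous (correlatedGaussian (V := V) a b) := by
  unfold correlatedGaussian
  fun_prop

lemma correlatedGaussian_eq_mul (a b : ℝ) (x y : V) :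
    correlatedGaussian a b (x, y) = exp (-a * ‖x‖ ^ 2) * exp (-a * ‖y‖ ^ 2 + b * ⟪x, y⟫) := by
  rw [correlatedGaussian, ← exp_add]
  ring_nf

variable [FiniteDimensional ℝ V] [MeasurableSpace V] [BorelSpace V]

lemma integrable_exp_neg_mul_sq_norm_add_mul_inner {a : ℝ} (ha : 0 < a) (b : ℝ) (w : V) :
    Integrable (fun v : V => exp (-a * ‖v‖ ^ 2 + b * ⟪w, v⟫)) := by
  refine (GaussianFourier.integrable_cexp_neg_mul_sq_norm_add
    (show 0 < (a : ℂ).re from ha) (b : ℂ) w).re.congr (.of_forall fun v => ?_)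
  change Complex.re _ = _
  rw [← ofReal_exp_neg_mul_sq_norm_add_mul_inner, Complex.ofReal_re]

lemma integrable_exp_neg_mul_sq_norm {a : ℝ} (ha : 0 < a) :
    Integrable (fun v : V => exp (-a * ‖v‖ ^ 2)) := by
  simpa using integrable_exp_neg_mul_sq_norm_add_mul_inner ha 0 (0 : V)

lemma integral_exp_neg_mul_sq_norm_add_mul_inner {a : ℝ} (ha : 0 < a) (b : ℝ) (w : V) :
    ∫ v : V, exp (-a * ‖v‖ ^ 2 + b * ⟪w, v⟫) =
      (π / a) ^ ((Module.finrank ℝ V : ℝ) / 2) * exp (b ^ 2 * ‖w‖ ^ 2 / (4 * a)) := by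
  apply Complex.ofReal_injective
  rw [← integral_complex_ofReal]
  simp only [ofReal_exp_neg_mul_sq_norm_add_mul_inner]
  rw [GaussianFourier.integral_cexp_neg_mul_sq_norm_add (show 0 < (a : ℂ).re from ha),
    Complex.ofReal_mul, Complex.ofReal_cpow (by positivity)]
  push_cast
  rfl

lemma integral_correlatedGaussian_right {a : ℝ} (b : ℝ) (ha : 0 < a) (x : V) :
    ∫ y, correlatedGaussian a b (x, y) =
      (π / a) ^ ((Module.finrank ℝ V : ℝ) / 2) * exp (-((a ^ 2 - b ^ 2 / 4) / a) * ‖x‖ ^ 2) := by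
  simp_rw [correlatedGaussian_eq_mul, integral_const_mul,
    integral_exp_neg_mul_sq_norm_add_mul_inner ha, mul_left_comm (exp _), ← exp_add]
  congr 2
  field_simp
  ring

lemma integral_integral_correlatedGaussian {a : ℝ} (b : ℝ) (ha : 0 < a)
    (hab : b ^ 2 / 4 < a ^ 2) :
    ∫ x : V, ∫ y, correlatedGaussian a b (x, y) =
      π ^ Module.finrank ℝ V / (a ^ 2 - b ^ 2 / 4) ^ ((Module.finrank ℝ V : ℝ) / 2) := by
  have hdet : 0 < a ^ 2 - b ^ 2 / 4 := by linarith
  simp_rw [integral_correlatedGaussian_right b ha, integral_const_mul,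
    GaussianFourier.integral_rexp_neg_mul_sq_norm (by positivity : 0 < (a ^ 2 - b ^ 2 / 4) / a)]
  have hprod : π / a * (π / ((a ^ 2 - b ^ 2 / 4) / a)) = π ^ 2 / (a ^ 2 - b ^ 2 / 4) := by
    field_simp
  rw [← mul_rpow (by positivity) (by positivity), hprod, div_rpow (by positivity) hdet.le,
    rpow_div_two_eq_sqrt _ (by positivity), sqrt_sq pi_pos.le, rpow_natCast]

lemma integrable_correlatedGaussian {a : ℝ} (b : ℝ) (ha : 0 < a) (hab : b ^ 2 / 4 < a ^ 2) :
    Integrable (correlatedGaussian (V := V) a b) := by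
  have hdet : 0 < (a ^ 2 - b ^ 2 / 4) / a := by apply div_pos _ ha; linarith
  rw [Measure.volume_eq_prod, integrable_prod_iff
    (continuous_correlatedGaussian a b).aestronglyMeasurable]
  refine ⟨.of_forall fun x => ?_, ?_⟩
  · simp_rw [correlatedGaussian_eq_mul]
    exact (integrable_exp_neg_mul_sq_norm_add_mul_inner ha b x).const_mul _
  · simp_rw [fun p => norm_of_nonneg (correlatedGaussian_pos a b p).le,
      integral_correlatedGaussian_right b ha]
    exact (integrable_exp_neg_mul_sq_norm hdet).const_mul _

end CorrelatedGaussian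

theorem mehler_kernel_sq_integral_general (N : ℕ) (t : ℝ) (ht : 0 < t)
    (lam w1 w2 : ℝ)
    (hlam : lam = Real.exp (-2 * t))
    (hw1 : w1 = lam / (1 - lam ^ 2))
    (hw2 : w2 = (1 + lam ^ 2) / (2 * (1 - lam ^ 2)))
    (K : EuclideanSpace ℝ (Fin N) → EuclideanSpace ℝ (Fin N) → ℝ)
    (hK : ∀ x y, K x y = (w1 / Real.pi) ^ ((N : ℝ) / 2) *
      Real.exp (2 * w1 * (inner ℝ x y : ℝ) - w2 * (‖x‖ ^ 2 + ‖y‖ ^ 2))) :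
    (∫ x : EuclideanSpace ℝ (Fin N), ∫ y : EuclideanSpace ℝ (Fin N), |K x y| ^ 2)
      = w1 ^ N ∧
    Integrable (fun p : EuclideanSpace ℝ (Fin N) × EuclideanSpace ℝ (Fin N) =>
      |K p.1 p.2| ^ 2) := by
  have hlam0 : 0 < lam := hlam ▸ exp_pos _
  have hlam1 : lam ^ 2 < 1 := by
    nlinarith [show lam < 1 from hlam ▸ exp_lt_one_iff.mpr (by linarith)]
  have hw1_nonneg : 0 ≤ w1 := hw1 ▸ div_nonneg hlam0.le (by linarith)
  have hw2_pos : 0 < 2 * w2 := by rw [hw2]; have := sub_pos.mpr hlam1; positivity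
  have hdet : (2 * w2) ^ 2 - (4 * w1) ^ 2 / 4 = 1 := by
    rw [hw1, hw2]
    field_simp [(sub_pos.mpr hlam1).ne']
    ring
  have hsq : ∀ x y, |K x y| ^ 2 = (w1 / π) ^ N * correlatedGaussian (2 * w2) (4 * w1) (x, y) := by
    intro x y
    rw [sq_abs, hK, mul_pow, rpow_div_two_eq_sqrt _ (by positivity), rpow_natCast, ← pow_mul,
      pow_mul', sq_sqrt (by positivity), ← exp_nat_mul, correlatedGaussian]
    congr 2
    push_cast
    ring
  simp_rw [hsq, integral_const_mul]
  refine ⟨?_, (integrable_correlatedGaussian _ hw2_pos (by linarith)).const_mul _⟩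
  rw [integral_integral_correlatedGaussian _ hw2_pos (by linarith), hdet, one_rpow, div_one,
    finrank_euclideanSpace_fin, div_pow, div_mul_cancel₀ _ (by positivity)]

/-- L² norm of the Mehler kernel equals `w1^N`; in particular the
kernel is square integrable on `ℝ^N × ℝ^N`. -/
theorem mehler_kernel_sq_integral (N : ℕ) (hN : 1 ≤ N) (t : ℝ) (ht : 0 < t)
    (lam w1 w2 : ℝ)
    (hlam : lam = Real.exp (-2 * t))
    (hw1 : w1 = lam / (1 - lam ^ 2))
    (hw2 : w2 = (1 + lam ^ 2) / (2 * (1 - lam ^ 2)))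
    (K : EuclideanSpace ℝ (Fin N) → EuclideanSpace ℝ (Fin N) → ℝ)
    (hK : ∀ x y, K x y = (w1 / Real.pi) ^ ((N : ℝ) / 2) *
      Real.exp (2 * w1 * (inner ℝ x y : ℝ) - w2 * (‖x‖ ^ 2 + ‖y‖ ^ 2))) :
    (∫ x : EuclideanSpace ℝ (Fin N), ∫ y : EuclideanSpace ℝ (Fin N), |K x y| ^ 2)
      = w1 ^ N ∧
    Integrable (fun p : EuclideanSpace ℝ (Fin N) × EuclideanSpace ℝ (Fin N) =>
      |K p.1 p.2| ^ 2) :=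
  mehler_kernel_sq_integral_general N t ht lam w1 w2 hlam hw1 hw2 K hK
end

section
/- Let H_B ≥ 0 be self-adjoint and V a symmetric operator such that ‖e^{-H_B t/2} V e^{-H_B t/2}‖ ≤ b t^{-1+ε} for all t > 0 with b > 0, 0 < ε < 1, and suppose H = H_B + V satisfies H ≥ cI for some c > 0. Define F(t) = e^{-H_B t/2}(I - tV)e^{-H_B t/2}. Then there exists t₀ > 0 such that for all t ∈ (0, t₀) and all unit vectors φ, 0 < ⟨φ, F(t)φ⟩ < 1; consequently ‖F(t)‖ < 1 for such t. -/
/-!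
Work in the Loewner order of the C⋆-algebra of bounded operators and write `S = e^{-t H_B / 2}`.
From `H_B + V ≥ c` we get `1 - tV ≤ 1 + t H_B - ct`, and conjugating by `S` (which commutes with
`H_B`) gives `F(t) ≤ (1 + t H_B - ct) e^{-t H_B} ≤ e^{-ct}`, by the functional calculus applied to
the scalar inequality `(1 + x - ct) e^{-x} ≤ e^{-ct}`, i.e. `1 + y ≤ e^y`. From below,
`F(t) = e^{-t H_B} - t S V S ≥ 1 - t ‖H_B‖ - b t^ε` by `e^{-x} ≥ 1 - x` and the bound on `S V S`,
and this is `≥ 1/2` for small `t`. So `1/2 ≤ F(t) ≤ e^{-ct} < 1`; for a positive operator this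
bounds the quadratic form and the norm alike.
-/

open NormedSpace

section FunctionalCalculus

variable {A : Type*} [NormedRing A] [StarRing A] [NormedAlgebra ℝ A]
  [ContinuousFunctionalCalculus ℝ A IsSelfAdjoint]

lemma cfc_exp_neg {a : A} (ha : IsSelfAdjoint a) : cfc (fun x => Real.exp (-x)) a = exp (-a) := by
  rw [cfc_comp_neg Real.exp a, CFC.real_exp_eq_normedSpace_exp ha.neg]

variable [PartialOrder A] [StarOrderedRing A]

lemma one_sub_le_exp_neg {a : A} (ha : IsSelfAdjoint a) : 1 - a ≤ exp (-a) := by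
  calc 1 - a = cfc (fun x => 1 - x) a := by rw [cfc_sub _ _ a, cfc_const_one ℝ a, cfc_id' ℝ a]
    _ ≤ cfc (fun x => Real.exp (-x)) a :=
        cfc_mono fun x _ => by linarith [Real.add_one_le_exp (-x)]
    _ = exp (-a) := cfc_exp_neg ha

lemma one_add_sub_algebraMap_mul_exp_neg_le {a : A} (ha : IsSelfAdjoint a) (s : ℝ) :
    (1 + a - algebraMap ℝ A s) * exp (-a) ≤ algebraMap ℝ A (Real.exp (-s)) := by
  calc (1 + a - algebraMap ℝ A s) * exp (-a)
        = cfc (fun x => (1 + x - s) * Real.exp (-x)) a := by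
          rw [cfc_mul _ _ a, cfc_exp_neg ha, cfc_sub _ _ a, cfc_const_add _ _ a, cfc_id' ℝ a,
            cfc_const s a, map_one]
    _ ≤ algebraMap ℝ A (Real.exp (-s)) := by
        refine cfc_le_algebraMap _ _ a fun x _ => ?_
        have h := mul_le_mul_of_nonneg_right (Real.add_one_le_exp (x - s)) (Real.exp_pos (-x)).le
        rwa [← Real.exp_add, show x - s + -x = -s by ring, show x - s + 1 = 1 + x - s by ring] at h

end FunctionalCalculus

section CStarAlgebra

variable {A : Type*} [CStarAlgebra A]

lemma exp_neg_half_smul_mul_self (h : A) (τ : ℝ) :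
    exp (-((τ / 2) • h)) * exp (-((τ / 2) • h)) = exp (-(τ • h)) := by
  let _ : NormedAlgebra ℚ A := NormedAlgebra.restrictScalars ℚ ℂ A
  rw [← exp_add_of_commute (Commute.refl _), ← neg_add, ← add_smul, add_halves]

variable [PartialOrder A] [StarOrderedRing A] {h v s : A} {τ : ℝ}

lemma algebraMap_le_conj_one_sub_smul (hh : IsSelfAdjoint h) (hv : IsSelfAdjoint v)
    (hs : IsSelfAdjoint s) (hss : s * s = exp (-(τ • h))) (hτ : 0 ≤ τ) :
    algebraMap ℝ A (1 - τ * ‖h‖ - τ * ‖s * v * s‖) ≤ s * (1 - τ • v) * s := by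
  have hτh : IsSelfAdjoint (τ • h) := (IsSelfAdjoint.all τ).smul hh
  have hexp : 1 - algebraMap ℝ A (τ * ‖h‖) ≤ s * s := by
    have : τ • h ≤ algebraMap ℝ A (τ * ‖h‖) := by
      simpa only [norm_smul, Real.norm_eq_abs, abs_of_nonneg hτ] using hτh.le_algebraMap_norm_self
    exact hss ▸ (sub_le_sub_left this 1).trans (one_sub_le_exp_neg hτh)
  have hpert : τ • (s * v * s) ≤ algebraMap ℝ A (τ * ‖s * v * s‖) := by
    have hsvs : IsSelfAdjoint (s * v * s) := by simpa only [hs.star_eq] using hv.conjugate' s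
    rw [map_mul, ← Algebra.smul_def]
    exact smul_le_smul_of_nonneg_left hsvs.le_algebraMap_norm_self hτ
  calc algebraMap ℝ A (1 - τ * ‖h‖ - τ * ‖s * v * s‖)
      = 1 - algebraMap ℝ A (τ * ‖h‖) - algebraMap ℝ A (τ * ‖s * v * s‖) := by
        rw [map_sub, map_sub, map_one]
    _ ≤ s * s - τ • (s * v * s) := sub_le_sub hexp hpert
    _ = s * (1 - τ • v) * s := by
        rw [mul_sub, sub_mul, mul_one, mul_smul_comm, smul_mul_assoc]

lemma conj_one_sub_smul_le_algebraMap (hh : IsSelfAdjoint h) (hs : IsSelfAdjoint s)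
    (hss : s * s = exp (-(τ • h))) (hsh : Commute s h) {c : ℝ} (hc : algebraMap ℝ A c ≤ h + v)
    (hτ : 0 ≤ τ) : s * (1 - τ • v) * s ≤ algebraMap ℝ A (Real.exp (-(c * τ))) := by
  have hgap : 1 - τ • v ≤ 1 + τ • h - algebraMap ℝ A (c * τ) := by
    have : 0 ≤ τ • (h + v - algebraMap ℝ A c) := smul_nonneg hτ (sub_nonneg.2 hc)
    rw [← sub_nonneg]
    convert this using 1
    rw [mul_comm, map_mul, ← Algebra.smul_def]
    module
  have hcomm : Commute s (1 + τ • h - algebraMap ℝ A (c * τ)) :=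
    ((Commute.one_right s).add_right (hsh.smul_right τ)).sub_right (Algebra.commutes _ s).symm
  calc s * (1 - τ • v) * s ≤ s * (1 + τ • h - algebraMap ℝ A (c * τ)) * s := by
        simpa only [hs.star_eq] using star_left_conjugate_le_conjugate hgap s
    _ = (1 + τ • h - algebraMap ℝ A (c * τ)) * exp (-(τ • h)) := by
        rw [hcomm.eq, mul_assoc, hss]
    _ ≤ algebraMap ℝ A (Real.exp (-(c * τ))) :=
        one_add_sub_algebraMap_mul_exp_neg_le ((IsSelfAdjoint.all τ).smul hh) (c * τ)

end CStarAlgebra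

section LoewnerOrder

variable {E : Type*} [NormedAddCommGroup E] [InnerProductSpace ℂ E]

lemma ContinuousLinearMap.re_inner_le_re_inner_of_le {T T' : E →L[ℂ] E} (h : T ≤ T') (x : E) :
    (inner ℂ x (T x)).re ≤ (inner ℂ x (T' x)).re := by
  simpa [inner_sub_right] using h.re_inner_nonneg_right x

lemma ContinuousLinearMap.re_inner_algebraMap_apply (r : ℝ) (x : E) :
    (inner ℂ x (algebraMap ℝ (E →L[ℂ] E) r x)).re = r * ‖x‖ ^ 2 := by
  simp [Algebra.algebraMap_eq_smul_one, ← inner_self_eq_norm_sq (𝕜 := ℂ)]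

lemma ContinuousLinearMap.algebraMap_le_of_le_re_inner [CompleteSpace E] {T : E →L[ℂ] E}
    (hT : IsSelfAdjoint T) {r : ℝ} (h : ∀ x, r * ‖x‖ ^ 2 ≤ (inner ℂ (T x) x).re) :
    algebraMap ℝ (E →L[ℂ] E) r ≤ T := by
  refine (le_def _ _).2 (isPositive_def'.2 ⟨hT.sub (.algebraMap _ (.all r)), fun x => ?_⟩)
  rw [reApplyInnerSelf_apply, sub_apply, inner_sub_left, map_sub,
    inner_re_symm (𝕜 := ℂ) (algebraMap ℝ (E →L[ℂ] E) r x), sub_nonneg]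
  exact (re_inner_algebraMap_apply r x).trans_le (h x)

lemma ContinuousLinearMap.le_re_inner_of_algebraMap_le {T : E →L[ℂ] E} {r : ℝ}
    (h : algebraMap ℝ (E →L[ℂ] E) r ≤ T) (x : E) : r * ‖x‖ ^ 2 ≤ (inner ℂ x (T x)).re :=
  (re_inner_algebraMap_apply r x).symm.trans_le (re_inner_le_re_inner_of_le h x)

lemma ContinuousLinearMap.re_inner_le_of_le_algebraMap {T : E →L[ℂ] E} {r : ℝ}
    (h : T ≤ algebraMap ℝ (E →L[ℂ] E) r) (x : E) : (inner ℂ x (T x)).re ≤ r * ‖x‖ ^ 2 :=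
  (re_inner_le_re_inner_of_le h x).trans_eq (re_inner_algebraMap_apply r x)

end LoewnerOrder

lemma exists_pos_forall_mul_add_mul_rpow_lt (M b : ℝ) {ε δ : ℝ} (hε : 0 < ε) (hδ : 0 < δ) :
    ∃ t₀ > 0, ∀ t : ℝ, 0 < t → t < t₀ → t * M + b * t ^ ε < δ := by
  have hcont : ContinuousAt (fun t : ℝ => t * M + b * t ^ ε) 0 :=
    (continuousAt_id.mul continuousAt_const).add
      (continuousAt_const.mul (Real.continuousAt_rpow_const 0 ε (Or.inr hε.le)))
  have hzero : (fun t : ℝ => t * M + b * t ^ ε) 0 = 0 := by simp [Real.zero_rpow hε.ne']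
  obtain ⟨t₀, ht₀, h⟩ := Metric.eventually_nhds_iff.1 (hcont.eventually (gt_mem_nhds (hzero ▸ hδ)))
  refine ⟨t₀, ht₀, fun t ht htt => h ?_⟩
  rwa [Real.dist_0_eq_abs, abs_of_pos ht]

theorem F_contraction_general
    {H : Type*} [NormedAddCommGroup H] [InnerProductSpace ℂ H] [CompleteSpace H]
    (HB V : H →L[ℂ] H)
    (hHBsa : IsSelfAdjoint HB)
    (hVsa : IsSelfAdjoint V)
    (S : ℝ → H →L[ℂ] H)
    (hS : ∀ t : ℝ, S t = NormedSpace.exp (((-t : ℝ) : ℂ) • HB))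
    (b ε c : ℝ) (hε : 0 < ε) (hc : 0 < c)
    (hbound : ∀ t : ℝ, 0 < t → ‖(S (t / 2) ∘L V) ∘L S (t / 2)‖ ≤ b * t ^ (-1 + ε))
    (hHc : ∀ φ : H, c * ‖φ‖ ^ 2 ≤ (inner ℂ ((HB + V) φ) φ : ℂ).re)
    (F : ℝ → H →L[ℂ] H)
    (hF : ∀ t : ℝ, F t = (S (t / 2) ∘L ((1 : H →L[ℂ] H) - t • V)) ∘L S (t / 2)) :
    ∃ t₀ : ℝ, 0 < t₀ ∧ ∀ t : ℝ, 0 < t → t < t₀ →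
      (∀ φ : H, ‖φ‖ = 1 →
        0 < (inner ℂ φ (F t φ) : ℂ).re ∧ (inner ℂ φ (F t φ) : ℂ).re < 1) ∧
      ‖F t‖ < 1 := by
  obtain ⟨t₀, ht₀, hsmall⟩ := exists_pos_forall_mul_add_mul_rpow_lt ‖HB‖ b hε one_half_pos
  refine ⟨t₀, ht₀, fun t ht htt => ?_⟩
  have hSexp : ∀ τ : ℝ, S τ = exp (-(τ • HB)) := fun τ => by rw [hS, Complex.coe_smul, neg_smul]
  set s := S (t / 2)
  have hs_exp : s = exp (-((t / 2) • HB)) := hSexp _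
  have hs : IsSelfAdjoint s := hs_exp ▸ ((IsSelfAdjoint.all _).smul hHBsa).neg.exp
  have hss : s * s = exp (-(t • HB)) := hs_exp ▸ exp_neg_half_smul_mul_self HB t
  have hsh : Commute s HB := hs_exp ▸ ((Commute.refl HB).smul_right _).neg_right.exp_right.symm
  have hFt : F t = s * (1 - t • V) * s := hF t
  have hpert : t * ‖s * V * s‖ ≤ b * t ^ ε := by
    calc t * ‖s * V * s‖ ≤ t * (b * t ^ (-1 + ε)) := by gcongr; exact hbound t ht
      _ = b * t ^ ε := by
        rw [mul_left_comm, ← Real.rpow_one_add' ht.le (by simpa using hε.ne'), add_neg_cancel_left]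
  have hlow : algebraMap ℝ (H →L[ℂ] H) (1 / 2) ≤ F t :=
    hFt ▸ (algebraMap_mono _ (by linarith [hsmall t ht htt])).trans
      (algebraMap_le_conj_one_sub_smul hHBsa hVsa hs hss ht.le)
  have hup : F t ≤ algebraMap ℝ (H →L[ℂ] H) (Real.exp (-(c * t))) :=
    hFt ▸ conj_one_sub_smul_le_algebraMap hHBsa hs hss hsh
      (ContinuousLinearMap.algebraMap_le_of_le_re_inner (hHBsa.add hVsa) hHc) ht.le
  have hexp_lt : Real.exp (-(c * t)) < 1 := Real.exp_lt_one_iff.2 (neg_neg_of_pos (mul_pos hc ht))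
  refine ⟨fun φ hφ => ⟨?_, ?_⟩, ?_⟩
  · linarith [hφ ▸ ContinuousLinearMap.le_re_inner_of_algebraMap_le hlow φ]
  · linarith [hφ ▸ ContinuousLinearMap.re_inner_le_of_le_algebraMap hup φ]
  · have hF0 : 0 ≤ F t := (algebraMap_nonneg _ (by norm_num)).trans hlow
    exact ((CStarAlgebra.norm_le_iff_le_algebraMap _ (Real.exp_pos _).le hF0).2 hup).trans_lt
      hexp_lt

/-- for `H_B ≥ 0` self-adjoint with heat semigroup
`S(t) = e^{-t H_B}`, a symmetric perturbation `V` with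
`‖e^{-H_B t/2} V e^{-H_B t/2}‖ ≤ b t^{ε-1}`, and `H = H_B + V ≥ cI`
(`c > 0`), the operator `F(t) = e^{-H_B t/2}(I - tV)e^{-H_B t/2}` satisfies:
there is `t₀ > 0` such that `0 < ⟨φ, F(t)φ⟩ < 1` for every unit vector `φ`
and `0 < t < t₀`; consequently `‖F(t)‖ < 1` for such `t`. -/
theorem F_contraction
    {H : Type*} [NormedAddCommGroup H] [InnerProductSpace ℂ H] [CompleteSpace H]
    (HB V : H →L[ℂ] H)
    (hHBsa : IsSelfAdjoint HB)
    (hHBpos : ∀ φ : H, 0 ≤ (inner ℂ (HB φ) φ : ℂ).re)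
    (hVsa : IsSelfAdjoint V)
    (S : ℝ → H →L[ℂ] H)
    (hS : ∀ t : ℝ, S t = NormedSpace.exp (((-t : ℝ) : ℂ) • HB))
    (b ε c : ℝ) (hb : 0 < b) (hε : 0 < ε) (hε1 : ε < 1) (hc : 0 < c)
    (hbound : ∀ t : ℝ, 0 < t → ‖(S (t / 2) ∘L V) ∘L S (t / 2)‖ ≤ b * t ^ (-1 + ε))
    (hcontr : ∀ t : ℝ, 0 < t → ‖S t‖ ≤ 1)
    (hHc : ∀ φ : H, c * ‖φ‖ ^ 2 ≤ (inner ℂ ((HB + V) φ) φ : ℂ).re)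
    (F : ℝ → H →L[ℂ] H)
    (hF : ∀ t : ℝ, F t = (S (t / 2) ∘L ((1 : H →L[ℂ] H) - t • V)) ∘L S (t / 2)) :
    ∃ t₀ : ℝ, 0 < t₀ ∧ ∀ t : ℝ, 0 < t → t < t₀ →
      (∀ φ : H, ‖φ‖ = 1 →
        0 < (inner ℂ φ (F t φ) : ℂ).re ∧ (inner ℂ φ (F t φ) : ℂ).re < 1) ∧
      ‖F t‖ < 1 :=
  F_contraction_general HB V hHBsa hVsa S hS b ε c hε hc hbound hHc F hF
end
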